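/- arXiv:2112.15263 — 4 statements merged into one kernel-verified Lean document; each statement's English description precedes it below -/
import Mathlib

section
/- If the forbidden moves T4, F1 and F3 are allowed, then the move Fv holds: any two Gauss diagrams related by the local move O(j,t) b U(i,s) ↦ U(i,s) b O(j,t) (an arrowtail moved past a bar and then an adjacent arrowhead) are related by a finite sequence of moves R1, T2, T3, T4, F1, F3, F4, Fs and Fo. -/
/-- Symbols of a Gauss word: over/under passages of a crossing with a sign,
and a bar. -/
inductive GSym : Type
  | O : ℕ → Bool → GSym
  | U : ℕ → Bool → GSym
  | bar : GSym
  deriving DecidableEq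

open GSym

/-- Rotation of a cyclic word. -/
def Rot (w w' : List GSym) : Prop := ∃ a t, w = a :: t ∧ w' = t ++ [a]

/-- Equivalence generated by a set of local moves together with rotation
(words are cyclic). -/
def MovesEquiv (S : List GSym → List GSym → Prop) : List GSym → List GSym → Prop :=
  Relation.EqvGen (fun w w' => S w w' ∨ Rot w w')

/-- A Gauss word of a twisted knot: each chord label occurs exactly once as `O`
and once as `U`, with a common sign. -/
def IsGaussWord (w : List GSym) : Prop :=
  ∀ i s, (O i s ∈ w ∨ U i s ∈ w) →
    w.count (O i s) = 1 ∧ w.count (U i s) = 1 ∧ ∀ t, t ≠ s → O i t ∉ w ∧ U i t ∉ w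

/-- R1: delete an adjacent pair of endpoints of one chord. -/
def StepR1 (w w' : List GSym) : Prop :=
  ∃ l r i s, (w = l ++ O i s :: U i s :: r ∨ w = l ++ U i s :: O i s :: r) ∧ w' = l ++ r

/-- R2: delete two parallel adjacent chords of opposite signs. -/
def StepR2 (w w' : List GSym) : Prop :=
  ∃ l m r i j s, i ≠ j ∧
    w = l ++ O i s :: O j (!s) :: m ++ U j (!s) :: U i s :: r ∧ w' = l ++ m ++ r

/-- R3: the triangle move on three mutually adjacent chord endpoints (one variant). -/
def StepR3 (w w' : List GSym) : Prop :=
  ∃ l m n r i j k s t u, i ≠ j ∧ j ≠ k ∧ i ≠ k ∧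
    w = l ++ U i s :: U j t :: m ++ O i s :: U k u :: n ++ O j t :: O k u :: r ∧
    w' = l ++ U j t :: U i s :: m ++ U k u :: O i s :: n ++ O k u :: O j t :: r

/-- T2: delete an adjacent pair of bars. -/
def StepT2 (w w' : List GSym) : Prop :=
  ∃ l r, w = l ++ bar :: bar :: r ∧ w' = l ++ r

/-- T3: push a chord across two bars, reversing its sign. -/
def StepT3 (w w' : List GSym) : Prop :=
  ∃ l m r i s,
    w = l ++ O i s :: bar :: m ++ U i s :: bar :: r ∧
    w' = l ++ bar :: O i (!s) :: m ++ bar :: U i (!s) :: r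

/-- T4: delete the two endpoints of a chord separated by a single bar
(the bar remains). -/
def StepT4 (w w' : List GSym) : Prop :=
  ∃ l r i s, (w = l ++ O i s :: bar :: U i s :: r ∨ w = l ++ U i s :: bar :: O i s :: r) ∧
    w' = l ++ bar :: r

/-- F1: swap two adjacent arrowheads. -/
def StepF1 (w w' : List GSym) : Prop :=
  ∃ l r i j s t, i ≠ j ∧ w = l ++ U i s :: U j t :: r ∧ w' = l ++ U j t :: U i s :: r

/-- F2: swap two adjacent arrowtails. -/
def StepF2 (w w' : List GSym) : Prop :=
  ∃ l r i j s t, i ≠ j ∧ w = l ++ O i s :: O j t :: r ∧ w' = l ++ O j t :: O i s :: r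

/-- F3: swap two arrowheads separated by a bar. -/
def StepF3 (w w' : List GSym) : Prop :=
  ∃ l r i j s t, i ≠ j ∧ w = l ++ U i s :: bar :: U j t :: r ∧
    w' = l ++ U j t :: bar :: U i s :: r

/-- F4: swap two arrowtails separated by a bar. -/
def StepF4 (w w' : List GSym) : Prop :=
  ∃ l r i j s t, i ≠ j ∧ w = l ++ O i s :: bar :: O j t :: r ∧
    w' = l ++ O j t :: bar :: O i s :: r

/-- Fs: swap an adjacent arrowhead and arrowtail of the same sign. -/
def StepFs (w w' : List GSym) : Prop :=
  ∃ l r i j s, i ≠ j ∧ w = l ++ U i s :: O j s :: r ∧ w' = l ++ O j s :: U i s :: r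

/-- Fo: swap an adjacent arrowhead and arrowtail of opposite signs. -/
def StepFo (w w' : List GSym) : Prop :=
  ∃ l r i j s, i ≠ j ∧ w = l ++ U i s :: O j (!s) :: r ∧ w' = l ++ O j (!s) :: U i s :: r

/-- Fu: move an arrowhead past a bar and an adjacent arrowtail. -/
def StepFu (w w' : List GSym) : Prop :=
  ∃ l r i j s t, i ≠ j ∧ w = l ++ U i s :: bar :: O j t :: r ∧
    w' = l ++ O j t :: bar :: U i s :: r

/-- Fv: move an arrowtail past a bar and an adjacent arrowhead. -/
def StepFv (w w' : List GSym) : Prop :=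
  ∃ l r i j s t, i ≠ j ∧ w = l ++ O j t :: bar :: U i s :: r ∧
    w' = l ++ U i s :: bar :: O j t :: r

/-!
Fv is a composite of three commutations: the arrowtail crosses the bar, then passes the
arrowhead (by Fs or Fo, according to the signs), then the arrowhead crosses the bar back.
An endpoint crosses a bar by inserting, with T4, an auxiliary chord whose endpoints straddle the
bar, trading places with both of them (Fs, then F4 for an arrowtail or F3 for an arrowhead), and
deleting the auxiliary chord, whose endpoints have become adjacent, with R1.
-/

namespace MovesEquiv

variable {S : List GSym → List GSym → Prop}

instance : Trans (MovesEquiv S) (MovesEquiv S) (MovesEquiv S) :=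
  ⟨Relation.EqvGen.trans _ _ _⟩

theorem symm {x y : List GSym} (h : MovesEquiv S x y) : MovesEquiv S y x :=
  Relation.EqvGen.symm _ _ h

theorem of_le {T : List GSym → List GSym → Prop} (hT : T ≤ S) {x y : List GSym} (h : T x y) :
    MovesEquiv S x y :=
  Relation.EqvGen.rel _ _ (Or.inl (hT x y h))

/- The auxiliary chord `j + 1` only has to differ from `j`: the moves act on arbitrary words,
not only on Gauss words, so no freshness condition is needed. -/
theorem tail_bar_comm (hR1 : StepR1 ≤ S) (hT4 : StepT4 ≤ S) (hFs : StepFs ≤ S)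
    (hF4 : StepF4 ≤ S) (l r : List GSym) (j : ℕ) (t : Bool) :
    MovesEquiv S (l ++ O j t :: bar :: r) (l ++ bar :: O j t :: r) := by
  have hj : j ≠ j + 1 := by omega
  calc MovesEquiv S _ (l ++ O j t :: U (j + 1) t :: bar :: O (j + 1) t :: r) :=
        (of_le hT4 ⟨l ++ [O j t], r, j + 1, t, .inr (by simp), by simp⟩).symm
    MovesEquiv S _ (l ++ U (j + 1) t :: O j t :: bar :: O (j + 1) t :: r) :=
        (of_le hFs ⟨l, bar :: O (j + 1) t :: r, j + 1, j, t, hj.symm, rfl, rfl⟩).symm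
    MovesEquiv S _ (l ++ U (j + 1) t :: O (j + 1) t :: bar :: O j t :: r) :=
        of_le hF4 ⟨l ++ [U (j + 1) t], r, j, j + 1, t, t, hj, by simp, by simp⟩
    MovesEquiv S _ (l ++ bar :: O j t :: r) :=
        of_le hR1 ⟨l, bar :: O j t :: r, j + 1, t, .inr rfl, rfl⟩

theorem head_bar_comm (hR1 : StepR1 ≤ S) (hT4 : StepT4 ≤ S) (hFs : StepFs ≤ S)
    (hF3 : StepF3 ≤ S) (l r : List GSym) (i : ℕ) (s : Bool) :
    MovesEquiv S (l ++ U i s :: bar :: r) (l ++ bar :: U i s :: r) := by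
  have hi : i ≠ i + 1 := by omega
  calc MovesEquiv S _ (l ++ U i s :: O (i + 1) s :: bar :: U (i + 1) s :: r) :=
        (of_le hT4 ⟨l ++ [U i s], r, i + 1, s, .inl (by simp), by simp⟩).symm
    MovesEquiv S _ (l ++ O (i + 1) s :: U i s :: bar :: U (i + 1) s :: r) :=
        of_le hFs ⟨l, bar :: U (i + 1) s :: r, i, i + 1, s, hi, rfl, rfl⟩
    MovesEquiv S _ (l ++ O (i + 1) s :: U (i + 1) s :: bar :: U i s :: r) :=
        of_le hF3 ⟨l ++ [O (i + 1) s], r, i, i + 1, s, s, hi, by simp, by simp⟩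
    MovesEquiv S _ (l ++ bar :: U i s :: r) :=
        of_le hR1 ⟨l, bar :: U i s :: r, i + 1, s, .inl rfl, rfl⟩

theorem tail_head_comm (hFs : StepFs ≤ S) (hFo : StepFo ≤ S) (l r : List GSym) {i j : ℕ}
    (hij : i ≠ j) (s t : Bool) :
    MovesEquiv S (l ++ O j t :: U i s :: r) (l ++ U i s :: O j t :: r) := by
  obtain rfl | rfl : t = s ∨ t = !s := by cases s <;> cases t <;> simp
  · exact (of_le hFs ⟨l, r, i, j, t, hij, rfl, rfl⟩).symm
  · exact (of_le hFo ⟨l, r, i, j, s, hij, rfl, rfl⟩).symm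

theorem of_stepFv (hR1 : StepR1 ≤ S) (hT4 : StepT4 ≤ S) (hF3 : StepF3 ≤ S) (hF4 : StepF4 ≤ S)
    (hFs : StepFs ≤ S) (hFo : StepFo ≤ S) {w w' : List GSym} (h : StepFv w w') :
    MovesEquiv S w w' := by
  obtain ⟨l, r, i, j, s, t, hij, rfl, rfl⟩ := h
  calc MovesEquiv S _ (l ++ bar :: O j t :: U i s :: r) :=
        tail_bar_comm hR1 hT4 hFs hF4 l _ j t
    MovesEquiv S _ (l ++ bar :: U i s :: O j t :: r) := by
        simpa using tail_head_comm hFs hFo (l ++ [bar]) r hij s t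
    MovesEquiv S _ (l ++ U i s :: bar :: O j t :: r) :=
        (head_bar_comm hR1 hT4 hFs hF3 l _ i s).symm

end MovesEquiv

open GSym in
/-- Move Fv is derivable from R1, T2, T3, T4, F1, F3, F4, Fs and Fo. -/
theorem Fv_derivable (w w' : List GSym) (h : StepFv w w') :
    MovesEquiv (fun x y => StepR1 x y ∨ StepT2 x y ∨ StepT3 x y ∨ StepT4 x y ∨
      StepF1 x y ∨ StepF3 x y ∨ StepF4 x y ∨ StepFs x y ∨ StepFo x y) w w' := by
  refine MovesEquiv.of_stepFv ?_ ?_ ?_ ?_ ?_ ?_ h <;>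
    intro x y hxy <;> simp only [hxy, true_or, or_true]
end

section
/- In the rewriting system generated by F1, F2, Fs, Fo, Fu, Fv, F3, F4, R1 and T4, any Gauss diagram of a twisted knot can be reduced to a Gauss diagram with no chords, i.e., a cyclic word consisting only of bars. -/
open GSym

/-! ### Auxiliary machinery -/

def SMoves : List GSym → List GSym → Prop := fun x y =>
  StepF1 x y ∨ StepF2 x y ∨ StepFs x y ∨ StepFo x y ∨
  StepFu x y ∨ StepFv x y ∨ StepF3 x y ∨ StepF4 x y ∨ StepR1 x y ∨ StepT4 x y

abbrev ME : List GSym → List GSym → Prop := MovesEquiv SMoves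

lemma me_refl (w : List GSym) : ME w w := Relation.EqvGen.refl w

lemma me_step {w w' : List GSym} (h : SMoves w w') : ME w w' :=
  Relation.EqvGen.rel _ _ (Or.inl h)

lemma me_step' {w w' : List GSym} (h : SMoves w' w) : ME w w' :=
  Relation.EqvGen.symm _ _ (me_step h)

lemma me_rot_head (a : GSym) (t : List GSym) : ME (a :: t) (t ++ [a]) :=
  Relation.EqvGen.rel _ _ (Or.inr ⟨a, t, rfl, rfl⟩)

lemma me_trans {a b c : List GSym} (h1 : ME a b) (h2 : ME b c) : ME a c :=
  Relation.EqvGen.trans _ _ _ h1 h2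

lemma me_rotate : ∀ (a b : List GSym), ME (a ++ b) (b ++ a)
  | [], b => by simpa using me_refl b
  | x :: a, b => by
    refine me_trans (me_rot_head x (a ++ b)) ?_
    have h := me_rotate a (b ++ [x])
    have e1 : (a ++ b) ++ [x] = a ++ (b ++ [x]) := by simp
    have e2 : (b ++ [x]) ++ a = b ++ (x :: a) := by simp
    rw [e1, ← e2]; exact h


lemma perm_snoc {α} (u : List α) (x : α) : (u ++ [x]).Perm (x :: u) :=
  List.perm_append_comm

lemma perm_snoc2 {α} (u : List α) (x y : α) : (u ++ [x, y]).Perm (y :: x :: u) :=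
  List.perm_append_comm.trans (List.Perm.swap y x u)

/-- Swap the head `U i s` past an adjacent chord symbol. -/
lemma me_swap_head {i j : ℕ} {s t : Bool} (hij : i ≠ j) (x : GSym)
    (hx : x = O j t ∨ x = U j t) (rest : List GSym) :
    ME (U i s :: x :: rest) (x :: U i s :: rest) := by
  rcases hx with rfl | rfl
  · by_cases hts : t = s
    · subst hts
      exact me_step (Or.inr <| Or.inr <| Or.inl ⟨[], rest, i, j, t, hij, rfl, rfl⟩)
    · have ht : t = !s := by cases s <;> cases t <;> simp_all
      subst ht
      exact me_step (Or.inr <| Or.inr <| Or.inr <| Or.inl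
        ⟨[], rest, i, j, s, hij, rfl, rfl⟩)
  · exact me_step (Or.inl ⟨[], rest, i, j, s, t, hij, rfl, rfl⟩)

/-- Jump the head `U i s` past a bar followed by a chord symbol. -/
lemma me_jump_head {i j : ℕ} {s t : Bool} (hij : i ≠ j) (x : GSym)
    (hx : x = O j t ∨ x = U j t) (rest : List GSym) :
    ME (U i s :: bar :: x :: rest) (x :: bar :: U i s :: rest) := by
  rcases hx with rfl | rfl
  · exact me_step (Or.inr <| Or.inr <| Or.inr <| Or.inr <| Or.inl
      ⟨[], rest, i, j, s, t, hij, rfl, rfl⟩)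
  · exact me_step (Or.inr <| Or.inr <| Or.inr <| Or.inr <| Or.inr <| Or.inr <| Or.inl
      ⟨[], rest, i, j, s, t, hij, rfl, rfl⟩)

/-- Key reduction lemma: if between `U i s` and `O i s` there are no endpoints of
chord `i`, then the chord can be deleted (up to rearranging the other symbols). -/
lemma me_inner (i : ℕ) (s : Bool) :
    ∀ n (m r : List GSym), m.length = n →
      (∀ x ∈ m, ∀ t, x ≠ O i t ∧ x ≠ U i t) →
      ∃ v, v.Perm (m ++ r) ∧ ME (U i s :: m ++ O i s :: r) v := by
  intro n
  induction n using Nat.strong_induction_on with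
  | _ n ih =>
    intro m r hlen hm
    subst hlen
    match m, hm with
    | [], _ =>
      refine ⟨r, List.Perm.refl r, ?_⟩
      exact me_step (Or.inr <| Or.inr <| Or.inr <| Or.inr <| Or.inr <| Or.inr <|
        Or.inr <| Or.inr <| Or.inl ⟨[], r, i, s, Or.inr rfl, rfl⟩)
    | [GSym.bar], _ =>
      refine ⟨bar :: r, List.Perm.refl _, ?_⟩
      exact me_step (Or.inr <| Or.inr <| Or.inr <| Or.inr <| Or.inr <| Or.inr <|
        Or.inr <| Or.inr <| Or.inr ⟨[], r, i, s, Or.inr rfl, rfl⟩)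
    | GSym.O j t :: m', hm =>
      have hij : i ≠ j := fun h => (hm (O j t) (by simp) t).1 (by rw [h])
      have h1 : ME (U i s :: (O j t :: m') ++ O i s :: r)
          (O j t :: U i s :: (m' ++ O i s :: r)) :=
        me_swap_head hij _ (Or.inl rfl) _
      have h2 := me_rot_head (O j t) (U i s :: (m' ++ O i s :: r))
      obtain ⟨v, hv, hme⟩ := ih m'.length (by simp) m' (r ++ [O j t]) rfl
        (fun x hx => hm x (by simp [hx]))
      refine ⟨v, ?_, me_trans h1 (me_trans ?_ hme)⟩
      · refine hv.trans ?_
        rw [show m' ++ (r ++ [O j t]) = (m' ++ r) ++ [O j t] from by simp]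
        exact perm_snoc _ _
      · have : (U i s :: (m' ++ O i s :: r)) ++ [O j t]
            = U i s :: m' ++ O i s :: (r ++ [O j t]) := by simp
        rw [this] at h2; exact h2
    | GSym.U j t :: m', hm =>
      have hij : i ≠ j := fun h => (hm (U j t) (by simp) t).2 (by rw [h])
      have h1 : ME (U i s :: (U j t :: m') ++ O i s :: r)
          (U j t :: U i s :: (m' ++ O i s :: r)) :=
        me_swap_head hij _ (Or.inr rfl) _
      have h2 := me_rot_head (U j t) (U i s :: (m' ++ O i s :: r))
      obtain ⟨v, hv, hme⟩ := ih m'.length (by simp) m' (r ++ [U j t]) rfl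
        (fun x hx => hm x (by simp [hx]))
      refine ⟨v, ?_, me_trans h1 (me_trans ?_ hme)⟩
      · refine hv.trans ?_
        rw [show m' ++ (r ++ [U j t]) = (m' ++ r) ++ [U j t] from by simp]
        exact perm_snoc _ _
      · have : (U i s :: (m' ++ O i s :: r)) ++ [U j t]
            = U i s :: m' ++ O i s :: (r ++ [U j t]) := by simp
        rw [this] at h2; exact h2
    | GSym.bar :: GSym.O j t :: m', hm =>
      have hij : i ≠ j := fun h => (hm (O j t) (by simp) t).1 (by rw [h])
      have h1 : ME (U i s :: (bar :: O j t :: m') ++ O i s :: r)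
          (O j t :: bar :: U i s :: (m' ++ O i s :: r)) :=
        me_jump_head hij _ (Or.inl rfl) _
      have h2 := me_rot_head (O j t) (bar :: U i s :: (m' ++ O i s :: r))
      have h3 := me_rot_head bar ((U i s :: (m' ++ O i s :: r)) ++ [O j t])
      obtain ⟨v, hv, hme⟩ := ih m'.length (by simp) m' (r ++ [O j t, bar]) rfl
        (fun x hx => hm x (by simp [hx]))
      refine ⟨v, ?_, me_trans h1 (me_trans h2 (me_trans ?_ hme))⟩
      · refine hv.trans ?_
        rw [show m' ++ (r ++ [O j t, bar]) = (m' ++ r) ++ [O j t, bar] from by simp]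
        exact perm_snoc2 _ _ _
      · have : ((U i s :: (m' ++ O i s :: r)) ++ [O j t]) ++ [bar]
            = U i s :: m' ++ O i s :: (r ++ [O j t, bar]) := by simp
        rw [this] at h3
        have hb : (bar :: U i s :: (m' ++ O i s :: r)) ++ [O j t]
            = bar :: ((U i s :: (m' ++ O i s :: r)) ++ [O j t]) := by simp
        rw [hb] at h2
        exact h3
    | GSym.bar :: GSym.U j t :: m', hm =>
      have hij : i ≠ j := fun h => (hm (U j t) (by simp) t).2 (by rw [h])
      have h1 : ME (U i s :: (bar :: U j t :: m') ++ O i s :: r)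
          (U j t :: bar :: U i s :: (m' ++ O i s :: r)) :=
        me_jump_head hij _ (Or.inr rfl) _
      have h2 := me_rot_head (U j t) (bar :: U i s :: (m' ++ O i s :: r))
      have h3 := me_rot_head bar ((U i s :: (m' ++ O i s :: r)) ++ [U j t])
      obtain ⟨v, hv, hme⟩ := ih m'.length (by simp) m' (r ++ [U j t, bar]) rfl
        (fun x hx => hm x (by simp [hx]))
      refine ⟨v, ?_, me_trans h1 (me_trans h2 (me_trans ?_ hme))⟩
      · refine hv.trans ?_
        rw [show m' ++ (r ++ [U j t, bar]) = (m' ++ r) ++ [U j t, bar] from by simp]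
        exact perm_snoc2 _ _ _
      · have : ((U i s :: (m' ++ O i s :: r)) ++ [U j t]) ++ [bar]
            = U i s :: m' ++ O i s :: (r ++ [U j t, bar]) := by simp
        rw [this] at h3
        exact h3
    | GSym.bar :: GSym.bar :: m', hm =>
      -- shuttle a fresh chord `j := i + 1` through the double bar
      set j := i + 1 with hj
      have hij : i ≠ j := by omega
      -- w0 = U i s :: bar :: bar :: m' ++ O i s :: r
      -- w1 = U i s :: bar :: U j true :: bar :: O j true :: m' ++ O i s :: r
      have h1 : ME (U i s :: (bar :: bar :: m') ++ O i s :: r)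
          (U i s :: bar :: U j true :: bar :: O j true :: (m' ++ O i s :: r)) := by
        refine me_step' (Or.inr <| Or.inr <| Or.inr <| Or.inr <| Or.inr <| Or.inr <|
          Or.inr <| Or.inr <| Or.inr ⟨[U i s, bar], m' ++ O i s :: r, j, true,
            Or.inr rfl, rfl⟩)
      have h2 : ME (U i s :: bar :: U j true :: bar :: O j true :: (m' ++ O i s :: r))
          (U j true :: bar :: U i s :: bar :: O j true :: (m' ++ O i s :: r)) :=
        me_step (Or.inr <| Or.inr <| Or.inr <| Or.inr <| Or.inr <| Or.inr <| Or.inl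
          ⟨[], bar :: O j true :: (m' ++ O i s :: r), i, j, s, true, hij, rfl, rfl⟩)
      have h3 : ME (U j true :: bar :: U i s :: bar :: O j true :: (m' ++ O i s :: r))
          (U j true :: bar :: O j true :: bar :: U i s :: (m' ++ O i s :: r)) :=
        me_step (Or.inr <| Or.inr <| Or.inr <| Or.inr <| Or.inl
          ⟨[U j true, bar], m' ++ O i s :: r, i, j, s, true, hij,
            rfl, rfl⟩)
      have h4 : ME (U j true :: bar :: O j true :: bar :: U i s :: (m' ++ O i s :: r))
          (bar :: bar :: U i s :: (m' ++ O i s :: r)) :=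
        me_step (Or.inr <| Or.inr <| Or.inr <| Or.inr <| Or.inr <| Or.inr <|
          Or.inr <| Or.inr <| Or.inr ⟨[], bar :: U i s :: (m' ++ O i s :: r), j, true,
            Or.inr rfl, rfl⟩)
      have h5 := me_rot_head bar (bar :: U i s :: (m' ++ O i s :: r))
      have h6 := me_rot_head bar ((U i s :: (m' ++ O i s :: r)) ++ [bar])
      obtain ⟨v, hv, hme⟩ := ih m'.length (by simp) m' (r ++ [bar, bar]) rfl
        (fun x hx => hm x (by simp [hx]))
      refine ⟨v, ?_, me_trans h1 (me_trans h2 (me_trans h3 (me_trans h4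
        (me_trans h5 (me_trans ?_ hme)))))⟩
      · refine hv.trans ?_
        rw [show m' ++ (r ++ [bar, bar]) = (m' ++ r) ++ [bar, bar] from by simp]
        exact perm_snoc2 _ _ _
      · have : ((U i s :: (m' ++ O i s :: r)) ++ [bar]) ++ [bar]
            = U i s :: m' ++ O i s :: (r ++ [bar, bar]) := by simp
        rw [this] at h6
        exact h6

lemma gauss_of_perm {v u : List GSym} (hp : v.Perm u) (h : IsGaussWord u) :
    IsGaussWord v := by
  intro i s hi
  have hi' : O i s ∈ u ∨ U i s ∈ u := by
    rcases hi with h1 | h1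
    · exact Or.inl (hp.mem_iff.mp h1)
    · exact Or.inr (hp.mem_iff.mp h1)
  obtain ⟨c1, c2, c3⟩ := h i s hi'
  refine ⟨by rw [hp.count_eq]; exact c1, by rw [hp.count_eq]; exact c2, ?_⟩
  intro t ht
  obtain ⟨d1, d2⟩ := c3 t ht
  exact ⟨fun hmem => d1 (hp.mem_iff.mp hmem), fun hmem => d2 (hp.mem_iff.mp hmem)⟩

open GSym in
/-- Using F1, F2, Fs, Fo, Fu, Fv, F3, F4, R1 and T4, every Gauss word of a
twisted knot reduces to a word consisting only of bars. -/
theorem reduces_to_bars (w : List GSym) (hw : IsGaussWord w) :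
    ∃ w' : List GSym, (∀ x ∈ w', x = GSym.bar) ∧
      MovesEquiv (fun x y => StepF1 x y ∨ StepF2 x y ∨ StepFs x y ∨ StepFo x y ∨
        StepFu x y ∨ StepFv x y ∨ StepF3 x y ∨ StepF4 x y ∨
        StepR1 x y ∨ StepT4 x y) w w' := by
  suffices h : ∀ n (w : List GSym), w.length = n → IsGaussWord w →
      ∃ w', (∀ x ∈ w', x = GSym.bar) ∧ ME w w' by
    exact h w.length w rfl hw
  intro n
  induction n using Nat.strong_induction_on with
  | _ n ih =>
    intro w hlen hw
    subst hlen
    by_cases hb : ∀ x ∈ w, x = GSym.bar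
    · exact ⟨w, hb, me_refl w⟩
    push_neg at hb
    obtain ⟨x, hxw, hxb⟩ := hb
    -- find a chord `i` with sign `s` such that `U i s ∈ w`
    obtain ⟨i, s, hUmem⟩ : ∃ i s, U i s ∈ w := by
      match x, hxb with
      | GSym.O i s, _ =>
        have := (hw i s (Or.inl hxw)).2.1
        exact ⟨i, s, List.count_pos_iff.mp (by omega)⟩
      | GSym.U i s, _ => exact ⟨i, s, hxw⟩
    obtain ⟨a, c, rfl⟩ := List.append_of_mem hUmem
    have hperm : (a ++ U i s :: c).Perm (U i s :: (c ++ a)) :=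
      List.perm_append_comm
    have hcounts := hw i s (Or.inr hUmem)
    have hOcount : (a ++ U i s :: c).count (O i s) = 1 := hcounts.1
    have hUcount : (a ++ U i s :: c).count (U i s) = 1 := hcounts.2.1
    have hOmem : O i s ∈ c ++ a := by
      have h1 : O i s ∈ U i s :: (c ++ a) := hperm.mem_iff.mp
        (List.count_pos_iff.mp (by omega))
      rcases List.mem_cons.mp h1 with h2 | h2
      · exact absurd h2 (by simp)
      · exact h2
    obtain ⟨m, r, hmr⟩ := List.append_of_mem hOmem
    -- counts in the rotated word
    have hrot : (a ++ U i s :: c).Perm (U i s :: m ++ O i s :: r) := by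
      have h2 : (U i s :: (c ++ a)).Perm (U i s :: (m ++ O i s :: r)) := by
        rw [hmr]
      exact hperm.trans h2
    have hOm : (m : List GSym).count (O i s) = 0 := by
      have := hrot.count_eq (O i s)
      simp [List.count_append, List.count_cons, hOcount] at this
      omega
    have hUm : (m : List GSym).count (U i s) = 0 := by
      have := hrot.count_eq (U i s)
      simp [List.count_append, List.count_cons, hUcount] at this
      omega
    have hnot : ∀ t : Bool, t ≠ s → O i t ∉ m ∧ U i t ∉ m := by
      intro t ht
      obtain ⟨d1, d2⟩ := hcounts.2.2 t ht
      constructor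
      · intro hmem
        exact d1 (hrot.mem_iff.mpr (by simp [hmem]))
      · intro hmem
        exact d2 (hrot.mem_iff.mpr (by simp [hmem]))
    have hm : ∀ x ∈ m, ∀ t, x ≠ O i t ∧ x ≠ U i t := by
      intro x hx t
      by_cases hts : t = s
      · subst hts
        constructor
        · rintro rfl
          exact absurd (List.count_eq_zero.mp hOm) (by simp [hx])
        · rintro rfl
          exact absurd (List.count_eq_zero.mp hUm) (by simp [hx])
      · obtain ⟨d1, d2⟩ := hnot t hts
        exact ⟨fun h => d1 (h ▸ hx), fun h => d2 (h ▸ hx)⟩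
    obtain ⟨v, hvperm, hvme⟩ := me_inner i s m.length m r rfl hm
    -- the full word is ME-equivalent to the rotated word
    have hme1 : ME (a ++ U i s :: c) (U i s :: m ++ O i s :: r) := by
      have h := me_rotate a (U i s :: c)
      have e : (U i s :: c) ++ a = U i s :: m ++ O i s :: r := by
        simp [hmr]
      rw [e] at h; exact h
    -- v is a Gauss word
    have hvG : IsGaussWord v := by
      refine gauss_of_perm hvperm ?_
      intro j t hjt
      have hmemw : ∀ y : GSym, y ∈ m ++ r → y ∈ a ++ U i s :: c := by
        intro y hy
        exact hrot.mem_iff.mpr (by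
          rcases List.mem_append.mp hy with h' | h' <;> simp [h'])
      have hij : j ≠ i := by
        intro hji
        rcases hjt with hmem | hmem
        · rw [hji] at hmem
          have hOinw : O i t ∈ a ++ U i s :: c := hmemw _ hmem
          have hts : t = s := by
            by_contra hts
            exact ((hw i s (Or.inr hUmem)).2.2 t hts).1 hOinw
          rw [hts] at hmem
          have := hrot.count_eq (O i s)
          simp [List.count_append, List.count_cons, hOcount] at this
          have h0 : (m ++ r).count (O i s) = 0 := by
            simp [List.count_append]; omega
          exact absurd (List.count_eq_zero.mp h0) (by simp [hmem])
        · rw [hji] at hmem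
          have hUinw : U i t ∈ a ++ U i s :: c := hmemw _ hmem
          have hts : t = s := by
            by_contra hts
            exact ((hw i s (Or.inr hUmem)).2.2 t hts).2 hUinw
          rw [hts] at hmem
          have := hrot.count_eq (U i s)
          simp [List.count_append, List.count_cons, hUcount] at this
          have h0 : (m ++ r).count (U i s) = 0 := by
            simp [List.count_append]; omega
          exact absurd (List.count_eq_zero.mp h0) (by simp [hmem])
      have hinw : O j t ∈ (a ++ U i s :: c) ∨ U j t ∈ (a ++ U i s :: c) := by
        rcases hjt with h' | h'
        · exact Or.inl (hmemw _ h')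
        · exact Or.inr (hmemw _ h')
      obtain ⟨c1, c2, c3⟩ := hw j t hinw
      have hcO : (m ++ r).count (O j t) = (a ++ U i s :: c).count (O j t) := by
        have := hrot.count_eq (O j t)
        simp [List.count_append, List.count_cons, hij, hij.symm] at this ⊢
        omega
      have hcU : (m ++ r).count (U j t) = (a ++ U i s :: c).count (U j t) := by
        have := hrot.count_eq (U j t)
        simp [List.count_append, List.count_cons, hij, hij.symm] at this ⊢
        omega
      refine ⟨by rw [hcO]; exact c1, by rw [hcU]; exact c2, ?_⟩
      intro t' ht'
      obtain ⟨d1, d2⟩ := c3 t' ht'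
      exact ⟨fun hmem => d1 (hmemw _ hmem), fun hmem => d2 (hmemw _ hmem)⟩
    -- recurse
    have hlenlt : v.length < (a ++ U i s :: c).length := by
      have h1 := hvperm.length_eq
      have h2 : (c ++ a).length = (m ++ O i s :: r).length := by rw [hmr]
      simp at h1 h2 ⊢
      omega
    obtain ⟨w', hbar, hme2⟩ := ih v.length hlenlt v rfl hvG
    exact ⟨w', hbar, me_trans hme1 (me_trans hvme hme2)⟩
end

section
/- Any Gauss diagram of a twisted knot can be changed into the Gauss diagram of a trivial knot (the empty cyclic word) or of a trivial knot with one bar (the cyclic word consisting of a single bar b) by a finite sequence of moves R1, R2, R3, T2, T3 and the forbidden moves T4, F1 and F3. -/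
open GSym

namespace TwistedProof
open GSym

abbrev TStep : List GSym → List GSym → Prop := fun x y =>
  StepR1 x y ∨ StepR2 x y ∨ StepR3 x y ∨ StepT2 x y ∨
    StepT3 x y ∨ StepT4 x y ∨ StepF1 x y ∨ StepF3 x y

abbrev E : List GSym → List GSym → Prop := MovesEquiv TStep

lemma Erefl (w : List GSym) : E w w := Relation.EqvGen.refl w

lemma Esymm {w w' : List GSym} (h : E w w') : E w' w := Relation.EqvGen.symm _ _ h

lemma Etrans {a b c : List GSym} (h : E a b) (h' : E b c) : E a c :=
  Relation.EqvGen.trans _ _ _ h h'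

lemma Estep {w w' : List GSym} (h : TStep w w') : E w w' :=
  Relation.EqvGen.rel _ _ (Or.inl h)

lemma Erot (a : GSym) (t : List GSym) : E (a :: t) (t ++ [a]) :=
  Relation.EqvGen.rel _ _ (Or.inr ⟨a, t, rfl, rfl⟩)

lemma Erotapp : ∀ (x y : List GSym), E (x ++ y) (y ++ x)
  | [], y => by simpa using Erefl y
  | a :: x, y => by
      have h1 : E ((a :: x) ++ y) (x ++ (y ++ [a])) := by
        simpa [List.append_assoc] using Erot a (x ++ y)
      have h2 : E (x ++ (y ++ [a])) (y ++ a :: x) := by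
        simpa [List.append_assoc] using Erotapp x (y ++ [a])
      exact Etrans h1 h2

lemma er1a (l r : List GSym) (i : ℕ) (s : Bool) :
    E (l ++ O i s :: U i s :: r) (l ++ r) :=
  Estep (Or.inl ⟨l, r, i, s, Or.inl rfl, rfl⟩)

lemma er1b (l r : List GSym) (i : ℕ) (s : Bool) :
    E (l ++ U i s :: O i s :: r) (l ++ r) :=
  Estep (Or.inl ⟨l, r, i, s, Or.inr rfl, rfl⟩)

lemma et2 (l r : List GSym) : E (l ++ bar :: bar :: r) (l ++ r) :=
  Estep (Or.inr <| Or.inr <| Or.inr <| Or.inl ⟨l, r, rfl, rfl⟩)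

lemma et4a (l r : List GSym) (i : ℕ) (s : Bool) :
    E (l ++ O i s :: bar :: U i s :: r) (l ++ bar :: r) :=
  Estep (Or.inr <| Or.inr <| Or.inr <| Or.inr <| Or.inr <| Or.inl
    ⟨l, r, i, s, Or.inl rfl, rfl⟩)

lemma ef1 (l r : List GSym) (i j : ℕ) (s t : Bool) (h : i ≠ j) :
    E (l ++ U i s :: U j t :: r) (l ++ U j t :: U i s :: r) :=
  Estep (Or.inr <| Or.inr <| Or.inr <| Or.inr <| Or.inr <| Or.inr <| Or.inl
    ⟨l, r, i, j, s, t, h, rfl, rfl⟩)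

/-- A tail can cross a bar (derived from T4 + R1). -/
lemma eobar (l r : List GSym) (i : ℕ) (s : Bool) :
    E (l ++ O i s :: bar :: r) (l ++ bar :: O i s :: r) := by
  have h2 : E (l ++ O i s :: bar :: r) (l ++ O i s :: bar :: U i s :: O i s :: r) := by
    simpa [List.append_assoc] using Esymm (er1b (l ++ [O i s, bar]) r i s)
  have h1 : E (l ++ O i s :: bar :: U i s :: O i s :: r) (l ++ bar :: O i s :: r) :=
    et4a l (O i s :: r) i s
  exact Etrans h2 h1

/-- A head can cross a bar (derived from T4 + R1). -/
lemma eubar (l r : List GSym) (i : ℕ) (s : Bool) :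
    E (l ++ U i s :: bar :: r) (l ++ bar :: U i s :: r) := by
  have h2 : E (l ++ U i s :: bar :: r) (l ++ U i s :: O i s :: bar :: U i s :: r) := by
    simpa [List.append_assoc] using Esymm (et4a (l ++ [U i s]) r i s)
  have h1 : E (l ++ U i s :: O i s :: bar :: U i s :: r) (l ++ bar :: U i s :: r) :=
    er1b l (bar :: U i s :: r) i s
  exact Etrans h2 h1

/-- A head can cross a tail of a different chord (derived from T2 + T4 + F1 + R1). -/
lemma eswapUO (l r : List GSym) (a b : ℕ) (s t : Bool) (h : a ≠ b) :
    E (l ++ U a s :: O b t :: r) (l ++ O b t :: U a s :: r) := by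
  have s1 : E (l ++ U a s :: O b t :: r) (l ++ bar :: bar :: U a s :: O b t :: r) :=
    Esymm (et2 l (U a s :: O b t :: r))
  have s2 : E (l ++ bar :: bar :: U a s :: O b t :: r)
      (l ++ bar :: O b t :: bar :: U b t :: U a s :: O b t :: r) := by
    simpa [List.append_assoc] using Esymm (et4a (l ++ [bar]) (U a s :: O b t :: r) b t)
  have s3 : E (l ++ bar :: O b t :: bar :: U b t :: U a s :: O b t :: r)
      (l ++ bar :: O b t :: bar :: U a s :: U b t :: O b t :: r) := by
    simpa [List.append_assoc] using
      ef1 (l ++ [bar, O b t, bar]) (O b t :: r) b a t s (Ne.symm h)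
  have s4 : E (l ++ bar :: O b t :: bar :: U a s :: U b t :: O b t :: r)
      (l ++ bar :: O b t :: bar :: U a s :: r) := by
    simpa [List.append_assoc] using er1b (l ++ [bar, O b t, bar, U a s]) r b t
  have s5 : E (l ++ bar :: O b t :: bar :: U a s :: r)
      (l ++ O b t :: bar :: bar :: U a s :: r) :=
    Esymm (eobar l (bar :: U a s :: r) b t)
  have s6 : E (l ++ O b t :: bar :: bar :: U a s :: r) (l ++ O b t :: U a s :: r) := by
    simpa [List.append_assoc] using et2 (l ++ [O b t]) (U a s :: r)
  exact Etrans s1 (Etrans s2 (Etrans s3 (Etrans s4 (Etrans s5 s6))))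

def OkFor (i : ℕ) (x : GSym) : Prop :=
  x = bar ∨ ∃ j t, j ≠ i ∧ (x = O j t ∨ x = U j t)

/-- A head can be pulled left across a block containing no symbol of its own chord. -/
lemma pull (i : ℕ) (s : Bool) :
    ∀ (m l r : List GSym), (∀ x ∈ m, OkFor i x) →
      E ((l ++ m) ++ (U i s :: r)) (l ++ (U i s :: (m ++ r)))
  | [], l, r, _ => by simpa using Erefl (l ++ U i s :: r)
  | x :: m, l, r, hm => by
      have hx := hm x List.mem_cons_self
      have ih := pull i s m (l ++ [x]) r (fun y hy => hm y (List.mem_cons_of_mem _ hy))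
      have hswap : E (l ++ x :: U i s :: (m ++ r)) (l ++ U i s :: x :: (m ++ r)) := by
        rcases hx with rfl | ⟨j, t, hj, rfl | rfl⟩
        · exact Esymm (eubar l (m ++ r) i s)
        · exact Esymm (eswapUO l (m ++ r) i j s t (fun hij => hj hij.symm))
        · exact ef1 l (m ++ r) j i t s hj
      have ih' : E (l ++ x :: (m ++ U i s :: r)) (l ++ x :: U i s :: (m ++ r)) := by
        simpa [List.append_assoc] using ih
      have goal' : E (l ++ x :: (m ++ U i s :: r)) (l ++ U i s :: x :: (m ++ r)) :=
        Etrans ih' hswap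
      simpa [List.append_assoc] using goal'

/-- Delete a chord whose two endpoints are separated only by symbols of other chords. -/
lemma del_chord (m r : List GSym) (i : ℕ) (s : Bool)
    (hm : ∀ x ∈ m, OkFor i x) :
    E (O i s :: (m ++ U i s :: r)) (m ++ r) := by
  have h1 := pull i s m [O i s] r hm
  have h1' : E (O i s :: (m ++ U i s :: r)) (O i s :: U i s :: (m ++ r)) := by
    simpa [List.append_assoc] using h1
  have h2 : E (O i s :: U i s :: (m ++ r)) (m ++ r) := by
    simpa using er1a [] (m ++ r) i s
  exact Etrans h1' h2

lemma bigE_final : ∀ (n : ℕ) (w : List GSym), w.length ≤ n → IsGaussWord w →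
    E w [] ∨ E w [bar] := by
  intro n
  induction n with
  | zero =>
    intro w hlen _
    have : w = [] := List.eq_nil_of_length_eq_zero (Nat.le_zero.mp hlen)
    subst this
    exact Or.inl (Erefl [])
  | succ n ih =>
    intro w hlen hw
    by_cases hO : ∃ i s, O i s ∈ w
    · obtain ⟨i, s, hmem⟩ := hO
      obtain ⟨l, r, rfl⟩ := List.append_of_mem hmem
      obtain ⟨hcO, hcU, hsign⟩ := hw i s (Or.inl hmem)
      have hperm : (l ++ O i s :: r).Perm (O i s :: (r ++ l)) := by
        have := List.perm_append_comm (l₁ := l) (l₂ := O i s :: r)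
        simpa using this
      -- the head is in the rest
      have hUin : U i s ∈ r ++ l := by
        have h7 : U i s ∈ l ++ O i s :: r :=
          List.count_pos_iff.mp (by rw [hcU]; omega)
        have h6 : U i s ∈ O i s :: (r ++ l) := hperm.subset h7
        rcases List.mem_cons.mp h6 with h | h
        · simp at h
        · exact h
      obtain ⟨m, r', hsplit⟩ := List.append_of_mem hUin
      -- counts in the pieces
      have hOc : (r ++ l).count (O i s) = 0 := by
        have h5 := hperm.count_eq (O i s)
        rw [hcO] at h5
        simp [List.count_append, List.count_cons] at h5 ⊢
        omega
      have hOm : O i s ∉ m ∧ O i s ∉ r' := by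
        rw [hsplit] at hOc
        simp [List.count_append, List.count_cons] at hOc
        exact ⟨List.count_eq_zero.mp hOc.1, List.count_eq_zero.mp hOc.2⟩
      have hUc : (r ++ l).count (U i s) = 1 := by
        have h5 := hperm.count_eq (U i s)
        rw [hcU] at h5
        simp [List.count_append, List.count_cons] at h5 ⊢
        omega
      have hUm : U i s ∉ m ∧ U i s ∉ r' := by
        rw [hsplit] at hUc
        simp [List.count_append, List.count_cons] at hUc
        exact ⟨List.count_eq_zero.mp (by omega), List.count_eq_zero.mp (by omega)⟩
      -- membership transport
      have hmemtrans : ∀ c : GSym, c ∈ m ++ r' → c ∈ l ++ O i s :: r := by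
        intro c hc
        have h6 : c ∈ O i s :: (r ++ l) := by
          rw [hsplit]
          rcases List.mem_append.mp hc with h | h
          · exact List.mem_cons_of_mem _ (List.mem_append_left _ h)
          · exact List.mem_cons_of_mem _ (List.mem_append_right _
              (List.mem_cons_of_mem _ h))
        exact hperm.mem_iff.mpr h6
      have hok : ∀ x ∈ m, OkFor i x := by
        intro x hxm
        have hxw : x ∈ l ++ O i s :: r :=
          hmemtrans x (List.mem_append_left _ hxm)
        match x with
        | GSym.bar => exact Or.inl rfl
        | GSym.O j t =>
          refine Or.inr ⟨j, t, ?_, Or.inl rfl⟩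
          rintro rfl
          by_cases hts : t = s
          · subst hts; exact hOm.1 hxm
          · exact (hsign t hts).1 hxw
        | GSym.U j t =>
          refine Or.inr ⟨j, t, ?_, Or.inr rfl⟩
          rintro rfl
          by_cases hts : t = s
          · subst hts; exact hUm.1 hxm
          · exact (hsign t hts).2 hxw
      -- the equivalence chain
      have e1 : E (l ++ O i s :: r) (O i s :: (r ++ l)) := by
        simpa using Erotapp l (O i s :: r)
      have e2 : E (O i s :: (r ++ l)) (m ++ r') := by
        rw [hsplit]
        exact del_chord m r' i s hok
      have e12 : E (l ++ O i s :: r) (m ++ r') := Etrans e1 e2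
      -- count transfer for other chords
      have hcnt : ∀ c : GSym, c ≠ O i s → c ≠ U i s →
          (m ++ r').count c = (l ++ O i s :: r).count c := by
        intro c h1 h2
        have h5 := hperm.count_eq c
        rw [hsplit] at h5
        simp [List.count_append, List.count_cons, h1, h2, Ne.symm h1, Ne.symm h2] at h5 ⊢
        omega
      -- Gauss property of the smaller word
      have hgw2 : IsGaussWord (m ++ r') := by
        intro j t hjt
        by_cases hji : j = i
        · subst hji
          exfalso
          rcases hjt with hin | hin
          · by_cases hts : t = s
            · subst hts
              rcases List.mem_append.mp hin with h | h
              · exact hOm.1 h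
              · exact hOm.2 h
            · exact (hsign t hts).1 (hmemtrans _ hin)
          · by_cases hts : t = s
            · subst hts
              rcases List.mem_append.mp hin with h | h
              · exact hUm.1 h
              · exact hUm.2 h
            · exact (hsign t hts).2 (hmemtrans _ hin)
        · have hne1 : O j t ≠ O i s := by simp [hji]
          have hne2 : O j t ≠ U i s := by simp
          have hne3 : U j t ≠ O i s := by simp
          have hne4 : U j t ≠ U i s := by simp [hji]
          have hjw : O j t ∈ l ++ O i s :: r ∨ U j t ∈ l ++ O i s :: r := by
            rcases hjt with h | h
            · exact Or.inl (hmemtrans _ h)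
            · exact Or.inr (hmemtrans _ h)
          obtain ⟨c1, c2, c3⟩ := hw j t hjw
          refine ⟨?_, ?_, ?_⟩
          · rw [hcnt _ hne1 hne2]; exact c1
          · rw [hcnt _ hne3 hne4]; exact c2
          · intro t' ht'
            constructor
            · intro hmem'
              exact (c3 t' ht').1 (hmemtrans _ hmem')
            · intro hmem'
              exact (c3 t' ht').2 (hmemtrans _ hmem')
      -- length decrease
      have hlen2 : (m ++ r').length ≤ n := by
        have hl := hperm.length_eq
        rw [hsplit] at hl
        simp [List.length_append] at hl hlen ⊢
        omega
      rcases ih (m ++ r') hlen2 hgw2 with h | h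
      · exact Or.inl (Etrans e12 h)
      · exact Or.inr (Etrans e12 h)
    · push_neg at hO
      have hnoU : ∀ (j : ℕ) (t : Bool), U j t ∉ w := by
        intro j t hU
        have h1 := (hw j t (Or.inr hU)).1
        have : O j t ∈ w := by
          rw [← List.count_pos_iff, h1]; omega
        exact hO j t this
      have hbar : ∀ x ∈ w, x = bar := by
        intro x hx
        match x with
        | GSym.bar => rfl
        | GSym.O j t => exact absurd hx (hO j t)
        | GSym.U j t => exact absurd hx (hnoU j t)
      match w, hlen, hbar with
      | [], _, _ => exact Or.inl (Erefl [])
      | [x], _, hbar =>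
        have : x = bar := hbar x (by simp)
        subst this
        exact Or.inr (Erefl [bar])
      | x :: y :: t, hlen, hbar =>
        have hx : x = bar := hbar x (by simp)
        have hy : y = bar := hbar y (by simp)
        subst hx; subst hy
        have e : E (bar :: bar :: t) t := by simpa using et2 [] t
        have hgt : IsGaussWord t := by
          intro j u hju
          exfalso
          rcases hju with h | h
          · have h9 : (O j u : GSym) ∈ bar :: bar :: t :=
              List.mem_cons_of_mem _ (List.mem_cons_of_mem _ h)
            have := hbar _ h9
            simp at this
          · have h9 : (U j u : GSym) ∈ bar :: bar :: t :=
              List.mem_cons_of_mem _ (List.mem_cons_of_mem _ h)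
            have := hbar _ h9
            simp at this
        have hlt : t.length ≤ n := by
          simp at hlen; omega
        rcases ih t hlt hgt with h | h
        · exact Or.inl (Etrans e h)
        · exact Or.inr (Etrans e h)

end TwistedProof

open GSym in
/-- Main theorem: any Gauss diagram of a twisted knot can be changed into the
Gauss diagram of a trivial knot, or a trivial knot with one bar, by moves
R1, R2, R3, T2, T3 and the forbidden moves T4, F1 and F3. -/
theorem twisted_unknotting (w : List GSym) (hw : IsGaussWord w) :
    MovesEquiv (fun x y => StepR1 x y ∨ StepR2 x y ∨ StepR3 x y ∨ StepT2 x y ∨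
        StepT3 x y ∨ StepT4 x y ∨ StepF1 x y ∨ StepF3 x y) w ([] : List GSym) ∨
    MovesEquiv (fun x y => StepR1 x y ∨ StepR2 x y ∨ StepR3 x y ∨ StepT2 x y ∨
        StepT3 x y ∨ StepT4 x y ∨ StepF1 x y ∨ StepF3 x y) w [GSym.bar] :=
  TwistedProof.bigE_final w.length w le_rfl hw
end

section
/- The number of bars in a Gauss diagram of a twisted knot is invariant modulo 2 under all extended Reidemeister moves and all forbidden moves T4, F1, F2, F3, F4, Fs, Fo, Fu, Fv. Consequently, a twisted knot Gauss diagram with an odd number of bars cannot be transformed into the empty (bar-free trivial) diagram by any sequence of these moves. -/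
open GSym

def TwistedMove (w w' : List GSym) : Prop :=
  StepR1 w w' ∨ StepR2 w w' ∨ StepR3 w w' ∨ StepT2 w w' ∨ StepT3 w w' ∨ StepT4 w w' ∨
    StepF1 w w' ∨ StepF2 w w' ∨ StepF3 w w' ∨ StepF4 w w' ∨ StepFs w w' ∨ StepFo w w' ∨
    StepFu w w' ∨ StepFv w w'

theorem Rot.count_eq {w w' : List GSym} (h : Rot w w') (a : GSym) : w.count a = w'.count a := by
  obtain ⟨b, t, rfl, rfl⟩ := h
  exact ((List.perm_append_singleton b t).count_eq a).symm

theorem StepT2.count_bar {w w' : List GSym} (h : StepT2 w w') :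
    w.count bar = w'.count bar + 2 := by
  obtain ⟨l, r, rfl, rfl⟩ := h
  simp only [List.count_append, List.count_cons_self]
  omega

/-- Every move other than T2 leaves the number of bars unchanged. -/
theorem TwistedMove.count_bar_mod_two {w w' : List GSym} (h : TwistedMove w w') :
    w.count bar % 2 = w'.count bar % 2 := by
  rcases h with ⟨l, r, i, s, (rfl | rfl), rfl⟩ | ⟨l, m, r, i, j, s, -, rfl, rfl⟩ |
    ⟨l, m, n, r, i, j, k, s, t, u, -, -, -, rfl, rfl⟩ | hT2 | ⟨l, m, r, i, s, rfl, rfl⟩ |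
    ⟨l, r, i, s, (rfl | rfl), rfl⟩ | ⟨l, r, i, j, s, t, -, rfl, rfl⟩ |
    ⟨l, r, i, j, s, t, -, rfl, rfl⟩ | ⟨l, r, i, j, s, t, -, rfl, rfl⟩ |
    ⟨l, r, i, j, s, t, -, rfl, rfl⟩ | ⟨l, r, i, j, s, -, rfl, rfl⟩ | ⟨l, r, i, j, s, -, rfl, rfl⟩ |
    ⟨l, r, i, j, s, t, -, rfl, rfl⟩ | ⟨l, r, i, j, s, t, -, rfl, rfl⟩
  case inr.inr.inr.inl => rw [hT2.count_bar, Nat.add_mod_right]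
  all_goals simp [List.count_append]

theorem Relation.EqvGen.apply_eq {α β : Type*} {r : α → α → Prop} {f : α → β}
    (hf : ∀ a b, r a b → f a = f b) {a b : α} (h : Relation.EqvGen r a b) : f a = f b :=
  congrArg (Quot.lift f hf) (Quot.eqvGen_sound h)

theorem MovesEquiv.count_bar_mod_two {w w' : List GSym} (h : MovesEquiv TwistedMove w w') :
    w.count bar % 2 = w'.count bar % 2 :=
  Relation.EqvGen.apply_eq (fun _ _ hm => hm.elim TwistedMove.count_bar_mod_two
    fun hr => by rw [hr.count_eq]) h

open GSym in
/-- The parity of the number of bars is invariant under all extended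
Reidemeister moves and all forbidden moves; consequently a twisted-knot Gauss
word with an odd number of bars cannot be transformed into the empty word. -/
theorem bar_parity_invariant :
    (∀ w w' : List GSym,
      MovesEquiv (fun x y => StepR1 x y ∨ StepR2 x y ∨ StepR3 x y ∨ StepT2 x y ∨
        StepT3 x y ∨ StepT4 x y ∨ StepF1 x y ∨ StepF2 x y ∨ StepF3 x y ∨
        StepF4 x y ∨ StepFs x y ∨ StepFo x y ∨ StepFu x y ∨ StepFv x y) w w' →
      w.count GSym.bar % 2 = w'.count GSym.bar % 2) ∧
    (∀ w : List GSym, IsGaussWord w → w.count GSym.bar % 2 = 1 →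
      ¬ MovesEquiv (fun x y => StepR1 x y ∨ StepR2 x y ∨ StepR3 x y ∨ StepT2 x y ∨
        StepT3 x y ∨ StepT4 x y ∨ StepF1 x y ∨ StepF2 x y ∨ StepF3 x y ∨
        StepF4 x y ∨ StepFs x y ∨ StepFo x y ∨ StepFu x y ∨ StepFv x y) w
        ([] : List GSym)) :=
  ⟨fun _ _ => MovesEquiv.count_bar_mod_two, fun w _ hodd h => by
    simpa [hodd] using MovesEquiv.count_bar_mod_two (w := w) (w' := []) h⟩
end
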